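/- Let x ≥ 0 and y be integers, and let G_0 be a graph of minimum order in the nonempty family M(x,y) = {G : |V(G)| < χ(G) + 2f(G) − x and f(G) ≤ y}. If A is a nonempty independent set of vertices of G_0, then χ(G_0 − A) = χ(G_0) − 1 and cl(G_0 − A) = cl(G_0). -/

import Mathlib

/-!
Removing a nonempty independent set `A` lowers `χ` and `ω` by at most one each, while the order
drops. If `f` did not change, `G₀ - A` would be a smaller member of `M(x,y)`; so either `χ` drops
and `ω` does not (the claim) or `ω` drops and `χ` does not. The latter is impossible: if `|A| ≥ 2`,
put back the vertex `a₀` of `A` lying on a maximum clique; `G₀ - (A \ {a₀})` keeps `χ` and `ω`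
and is again a smaller member of `M(x,y)`. If `A = {a}`, then `a` has a non-neighbour `w`
(otherwise `χ` would drop), and `{a, w}` falls under the first case.
-/

/-- The chromatic number of `G` as a natural number. -/
noncomputable def chi {V : Type*} (G : SimpleGraph V) : ℕ := G.chromaticNumber.toNat

/-- `f(G) = χ(G) − cl(G)`. -/
noncomputable def fDiff {V : Type*} (G : SimpleGraph V) : ℕ := chi G - G.cliqueNum

/-- Membership in the family `M(x,y) = {G : |V(G)| < χ(G) + 2f(G) − x and f(G) ≤ y}`. -/
def inM (x y : ℤ) {V : Type*} [Fintype V] (G : SimpleGraph V) : Prop :=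
  (Fintype.card V : ℤ) < chi G + 2 * fDiff G - x ∧ (fDiff G : ℤ) ≤ y

/-- The set of orders of members of `M(x,y)`. -/
def McardSet (x y : ℤ) : Set ℕ := {n | ∃ G : SimpleGraph (Fin n), inM x y G}

namespace SimpleGraph

variable {V W : Type*} {G : SimpleGraph V} {G' : SimpleGraph W}

lemma colorable_chi [Finite V] (G : SimpleGraph V) : G.Colorable (chi G) :=
  G.colorable_chromaticNumber_of_fintype

lemma chi_le_iff_colorable [Finite V] {n : ℕ} : chi G ≤ n ↔ G.Colorable n :=
  ⟨fun h ↦ (colorable_chi G).mono h, fun h ↦ ENat.toNat_le_of_le_natCast h.chromaticNumber_le⟩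

lemma chi_le_of_hom [Finite V] [Finite W] (f : G →g G') : chi G ≤ chi G' :=
  chi_le_iff_colorable.2 ((colorable_chi G').of_hom f)

lemma chi_congr (f : G ≃g G') : chi G = chi G' :=
  congrArg ENat.toNat (chromaticNumber_congr f)

lemma cliqueNum_le_of_embedding [Finite W] (f : G ↪g G') : G.cliqueNum ≤ G'.cliqueNum := by
  classical
  obtain ⟨s, hs⟩ := G.exists_isNClique_cliqueNum
  have hclique : G'.IsClique (s.map f.toEmbedding : Set W) := by
    rw [Finset.coe_map]
    rintro _ ⟨u, hu, rfl⟩ _ ⟨v, hv, rfl⟩ hne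
    exact f.map_rel_iff.2 (hs.isClique hu hv (ne_of_apply_ne f hne))
  simpa [hs.card_eq] using hclique.card_le_cliqueNum

lemma cliqueNum_congr [Finite V] [Finite W] (f : G ≃g G') : G.cliqueNum = G'.cliqueNum :=
  le_antisymm (cliqueNum_le_of_embedding f.toEmbedding)
    (cliqueNum_le_of_embedding f.symm.toEmbedding)

lemma IsClique.card_le_cliqueNum_induce [Finite V] {s : Finset V} {T : Set V}
    (hs : G.IsClique s) (hsT : ↑s ⊆ T) : s.card ≤ (G.induce T).cliqueNum := by
  classical
  have hclique : (G.induce T).IsClique (s.subtype (· ∈ T) : Set T) := by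
    intro a ha b hb hab
    rw [Finset.mem_coe, Finset.mem_subtype] at ha hb
    exact hs ha hb (Subtype.coe_injective.ne hab)
  calc s.card = (s.subtype (· ∈ T)).card := by
        rw [Finset.card_subtype, Finset.filter_true_of_mem fun v hv ↦ hsT hv]
    _ ≤ _ := hclique.card_le_cliqueNum

lemma chi_le_chi_induce_compl_add_one [Finite V] {A : Set V} (hA : G.IsIndepSet A) :
    chi G ≤ chi (G.induce Aᶜ) + 1 := by
  classical
  obtain ⟨c⟩ := colorable_chi (G.induce Aᶜ)
  refine chi_le_iff_colorable.2 ⟨Coloring.mk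
    (fun v ↦ if h : v ∈ A then Fin.last _ else (c ⟨v, h⟩).castSucc) ?_⟩
  intro u v huv
  by_cases hu : u ∈ A <;> by_cases hv : v ∈ A <;> simp only [hu, hv, dite_true, dite_false]
  · exact absurd huv (hA hu hv huv.ne)
  · exact (Fin.castSucc_lt_last _).ne'
  · exact (Fin.castSucc_lt_last _).ne
  · exact Fin.castSucc_injective _ |>.ne (c.valid (G := G.induce Aᶜ) huv)

lemma cliqueNum_le_cliqueNum_induce_compl_add_one [Finite V] {A : Set V}
    (hA : G.IsIndepSet A) : G.cliqueNum ≤ (G.induce Aᶜ).cliqueNum + 1 := by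
  classical
  obtain ⟨s, hs⟩ := G.exists_isNClique_cliqueNum
  have hin : (s.filter (· ∈ A)).card ≤ 1 := Finset.card_le_one.2 fun u hu v hv ↦ by
    simp only [Finset.mem_filter] at hu hv
    by_contra hne
    exact hA hu.2 hv.2 hne (hs.isClique hu.1 hv.1 hne)
  have hout : (s.filter (· ∉ A)).card ≤ (G.induce Aᶜ).cliqueNum :=
    (hs.isClique.subset (Finset.filter_subset _ s)).card_le_cliqueNum_induce
      fun v hv ↦ (Finset.mem_filter.1 hv).2
  have := Finset.card_filter_add_card_filter_not (s := s) (· ∈ A)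
  have := hs.card_eq
  omega

lemma chi_induce_compl_singleton_add_one_le [Finite V] {a : V} (ha : ∀ w, w ≠ a → G.Adj a w) :
    chi (G.induce {a}ᶜ) + 1 ≤ chi G := by
  obtain ⟨C⟩ := colorable_chi G
  have hpos : 0 < chi G := Fin.pos (C a)
  let C' : (G.induce {a}ᶜ).Coloring {c // c ≠ C a} :=
    Coloring.mk (fun v ↦ ⟨C v, (C.valid (ha v v.2)).symm⟩)
      fun huv hc ↦ C.valid huv (congrArg Subtype.val hc)
  have := chi_le_iff_colorable.2 C'.colorable
  simp only [Fintype.card_subtype_compl, Fintype.card_fin, Fintype.card_unique] at this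
  omega

lemma exists_cliqueNum_induce_compl_diff_singleton_eq [Finite V] {A : Set V}
    (hA : G.IsIndepSet A) (h : (G.induce Aᶜ).cliqueNum < G.cliqueNum) :
    ∃ a ∈ A, (G.induce (A \ {a})ᶜ).cliqueNum = G.cliqueNum := by
  obtain ⟨s, hs⟩ := G.exists_isNClique_cliqueNum
  have hmeet : ∃ a ∈ s, a ∈ A := by
    by_contra! hdisj
    have := hs.isClique.card_le_cliqueNum_induce (T := Aᶜ) hdisj
    exact this.not_gt (hs.card_eq ▸ h)
  obtain ⟨a, has, haA⟩ := hmeet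
  refine ⟨a, haA, le_antisymm (cliqueNum_induce_le _) ?_⟩
  -- an independent set meets a clique in at most one vertex
  have hsub : ↑s ⊆ (A \ {a})ᶜ := fun v hv ⟨hvA, hva⟩ ↦
    hA hvA haA hva (hs.isClique hv has hva)
  exact hs.card_eq ▸ hs.isClique.card_le_cliqueNum_induce hsub

end SimpleGraph

open SimpleGraph

def IsMinimalInM (x y : ℤ) {V : Type*} [Fintype V] (G : SimpleGraph V) : Prop :=
  inM x y G ∧ ∀ n ∈ McardSet x y, Fintype.card V ≤ n

namespace IsMinimalInM

variable {V W : Type*} [Fintype V] {x y : ℤ} {G : SimpleGraph V}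

lemma card_le (hG : IsMinimalInM x y G) [Fintype W] {H : SimpleGraph W} (hH : inM x y H) :
    Fintype.card V ≤ Fintype.card W := by
  refine hG.2 _ ⟨H.overFin rfl, ?_⟩
  have hiso := H.overFinIso rfl
  simpa only [inM, fDiff, Fintype.card_fin, ← chi_congr hiso, ← cliqueNum_congr hiso] using hH

lemma fDiff_induce_compl_ne (hG : IsMinimalInM x y G) {S : Set V} (hS : S.Nonempty)
    (hχ : chi G ≤ chi (G.induce Sᶜ) + 1) : fDiff (G.induce Sᶜ) ≠ fDiff G := by
  classical
  intro hf
  obtain ⟨hcard, hy⟩ := hG.1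
  obtain ⟨a, ha⟩ := hS
  have hlt : Fintype.card ↥Sᶜ < Fintype.card V :=
    Fintype.card_subtype_lt (x := a) (by simpa using ha)
  have := hG.card_le (H := G.induce Sᶜ) ⟨by rw [hf]; omega, hf ▸ hy⟩
  omega

lemma chi_induce_compl_eq_of_cliqueNum_lt (hG : IsMinimalInM x y G) {A : Set V}
    (hA : A.Nonempty) (hind : G.IsIndepSet A)
    (hω : (G.induce Aᶜ).cliqueNum < G.cliqueNum) : chi (G.induce Aᶜ) = chi G := by
  have hχ := chi_le_chi_induce_compl_add_one hind
  have hf := hG.fDiff_induce_compl_ne hA hχ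
  have := chi_le_of_hom (Embedding.induce (G := G) Aᶜ).toHom
  have := cliqueNum_le_cliqueNum_induce_compl_add_one hind
  unfold fDiff at hf
  omega

lemma cliqueNum_induce_compl_eq_of_nontrivial (hG : IsMinimalInM x y G) {A : Set V}
    (hA : A.Nontrivial) (hind : G.IsIndepSet A) :
    (G.induce Aᶜ).cliqueNum = G.cliqueNum := by
  refine (cliqueNum_induce_le _).antisymm (not_lt.1 fun hω ↦ ?_)
  have hχA := hG.chi_induce_compl_eq_of_cliqueNum_lt hA.nonempty hind hω
  obtain ⟨a, ha, hωa⟩ := exists_cliqueNum_induce_compl_diff_singleton_eq hind hω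
  obtain ⟨b, hb, hba⟩ := hA.exists_ne a
  have hχa : chi (G.induce (A \ {a})ᶜ) = chi G := le_antisymm
    (chi_le_of_hom (Embedding.induce _).toHom)
    (hχA ▸ chi_le_of_hom (G.induceHomOfLE (Set.compl_subset_compl.2 Set.sdiff_subset)).toHom)
  exact hG.fDiff_induce_compl_ne (S := A \ {a}) ⟨b, hb, hba⟩ (by omega)
    (by rw [fDiff, fDiff, hχa, hωa])

lemma cliqueNum_induce_compl_eq (hG : IsMinimalInM x y G) {A : Set V}
    (hA : A.Nonempty) (hind : G.IsIndepSet A) :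
    (G.induce Aᶜ).cliqueNum = G.cliqueNum := by
  obtain ⟨a, rfl⟩ | hA := hA.exists_eq_singleton_or_nontrivial
  swap
  · exact hG.cliqueNum_induce_compl_eq_of_nontrivial hA hind
  refine (cliqueNum_induce_le _).antisymm (not_lt.1 fun hω ↦ ?_)
  have hχ := hG.chi_induce_compl_eq_of_cliqueNum_lt (Set.singleton_nonempty a) hind hω
  obtain ⟨w, hwa, hnadj⟩ : ∃ w, w ≠ a ∧ ¬ G.Adj a w := by
    by_contra! huniv
    have := chi_induce_compl_singleton_add_one_le huniv
    omega
  -- `{a, w}` is a nontrivial independent set with `ω(G - {a, w}) ≤ ω(G - a) < ω(G)`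
  have hpair : G.IsIndepSet {a, w} := Set.pairwise_pair.2 fun _ ↦ ⟨hnadj, fun h ↦ hnadj h.symm⟩
  have hsub : ({a, w} : Set V)ᶜ ⊆ {a}ᶜ :=
    Set.compl_subset_compl.2 (Set.singleton_subset_iff.2 (Set.mem_insert a {w}))
  have hle := cliqueNum_le_of_embedding (G.induceHomOfLE hsub)
  rw [hG.cliqueNum_induce_compl_eq_of_nontrivial (Set.nontrivial_pair hwa.symm) hpair] at hle
  omega

end IsMinimalInM

theorem stmt12_general {V : Type*} [Fintype V] (x y : ℤ)
    (G₀ : SimpleGraph V) (hG₀ : inM x y G₀)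
    (hmin : ∀ n ∈ McardSet x y, Fintype.card V ≤ n)
    (A : Set V) (hA : A.Nonempty) (hindep : ∀ u ∈ A, ∀ v ∈ A, ¬ G₀.Adj u v) :
    chi (G₀.induce Aᶜ) = chi G₀ - 1 ∧ (G₀.induce Aᶜ).cliqueNum = G₀.cliqueNum := by
  have hG : IsMinimalInM x y G₀ := ⟨hG₀, hmin⟩
  have hind : G₀.IsIndepSet A := fun u hu v hv _ ↦ hindep u hu v hv
  have hω := hG.cliqueNum_induce_compl_eq hA hind
  have hχ := chi_le_chi_induce_compl_add_one hind
  have hf := hG.fDiff_induce_compl_ne hA hχ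
  have := chi_le_of_hom (Embedding.induce (G := G₀) Aᶜ).toHom
  rw [fDiff, fDiff, hω] at hf
  exact ⟨by omega, hω⟩

theorem stmt12 {V : Type*} [Fintype V] (x y : ℤ) (hx : 0 ≤ x)
    (G₀ : SimpleGraph V) (hG₀ : inM x y G₀)
    (hmin : ∀ n ∈ McardSet x y, Fintype.card V ≤ n)
    (A : Set V) (hA : A.Nonempty) (hindep : ∀ u ∈ A, ∀ v ∈ A, ¬ G₀.Adj u v) :
    chi (G₀.induce Aᶜ) = chi G₀ - 1 ∧ (G₀.induce Aᶜ).cliqueNum = G₀.cliqueNum :=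
  stmt12_general x y G₀ hG₀ hmin A hA hindep
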